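/- Let λ = Σ_{i=1}^q λ_i^δ (δ_i − δ_{p+i}) + Σ_{j=1}^s λ_j^ε (ε_j − ε_{r+j}) be a weight of gl(p+q|r+s) vanishing on h ∩ k (r ≥ s, p ≥ q). Suppose ⟨λ, α⟩ ∈ 2ℕ for every positive restricted root α in Σ⁺ = {i a_i^B, i(a_i^B + a_k^B), i a_j^F, i(a_j^F + a_l^F), i(a_i^B ± a_j^F)} ∪ {i(a_i^B − a_j^B), i(a_i^F − a_j^F) : i < j}, where i a_i^B = ½(δ_{p+i} − δ_i) and i a_j^F = ½(ε_{r+j} − ε_j). Then −λ_1^δ ≥ ⋯ ≥ −λ_q^δ ≥ λ_1^ε ≥ ⋯ ≥ λ_s^ε ≥ 0 and all λ_i^δ, λ_j^ε are even integers. -/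

import Mathlib

noncomputable section

/-- The basis weight `δ_i` (for `Sum.inl i`) resp. `ε_j` (for `Sum.inr j`), 0-based. -/
def wtN (a : ℕ ⊕ ℕ) : (ℕ ⊕ ℕ) → ℝ := Pi.single a 1

/-- The invariant form with `⟨δ_i,δ_j⟩ = δ_{ij}` (`i,j < m`), `⟨ε_i,ε_j⟩ = −δ_{ij}`
(`i,j < n`), `⟨δ_i,ε_j⟩ = 0`. -/
def wformN (m n : ℕ) (v w : (ℕ ⊕ ℕ) → ℝ) : ℝ :=
  (∑ i ∈ Finset.range m, v (Sum.inl i) * w (Sum.inl i)) -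
    ∑ j ∈ Finset.range n, v (Sum.inr j) * w (Sum.inr j)

/-- The restricted root generator `i a_i^B = ½(δ_{p+i} − δ_i)`. -/
def abN (p : ℕ) (i : ℕ) : (ℕ ⊕ ℕ) → ℝ :=
  (2⁻¹ : ℝ) • (wtN (Sum.inl (p + i)) - wtN (Sum.inl i))

/-- The restricted root generator `i a_j^F = ½(ε_{r+j} − ε_j)`. -/
def afN (r : ℕ) (j : ℕ) : (ℕ ⊕ ℕ) → ℝ :=
  (2⁻¹ : ℝ) • (wtN (Sum.inr (r + j)) - wtN (Sum.inr j))

/-- The positive restricted root system `Σ⁺` of `gl(p+q|r+s)` in type AIII|AIII. -/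
def sigmaPlusN (p q r s : ℕ) : Set ((ℕ ⊕ ℕ) → ℝ) :=
  {v | ∃ i < q, v = abN p i} ∪
  {v | ∃ i < q, ∃ k < q, v = abN p i + abN p k} ∪
  {v | ∃ j < s, v = afN r j} ∪
  {v | ∃ j < s, ∃ l < s, v = afN r j + afN r l} ∪
  {v | ∃ i < q, ∃ j < s, v = abN p i - afN r j} ∪
  {v | ∃ i < q, ∃ j < s, v = abN p i + afN r j} ∪
  {v | ∃ i, ∃ j, i < j ∧ j < q ∧ v = abN p i - abN p j} ∪
  {v | ∃ i, ∃ j, i < j ∧ j < s ∧ v = afN r i - afN r j}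

/-- The weight `λ = Σ_i λ_i^δ (δ_i − δ_{p+i}) + Σ_j λ_j^ε (ε_j − ε_{r+j})`,
vanishing on `h ∩ k`. -/
def lamVecN (p q r s : ℕ) (ld le : ℕ → ℝ) : (ℕ ⊕ ℕ) → ℝ :=
  (∑ i ∈ Finset.range q, ld i • (wtN (Sum.inl i) - wtN (Sum.inl (p + i)))) +
    ∑ j ∈ Finset.range s, le j • (wtN (Sum.inr j) - wtN (Sum.inr (r + j)))

/-! Pairing `λ` with the generators gives `⟨λ, i a_i^B⟩ = -λ_i^δ` and `⟨λ, i a_j^F⟩ = λ_j^ε`.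
Every claimed inequality is `0 ≤ ⟨λ, α⟩` for a root `α` of `Σ⁺` that is a generator or a
difference of two generators, and the evenness comes from the generators themselves. -/

lemma wformN_sub_right (m n : ℕ) (v w₁ w₂ : (ℕ ⊕ ℕ) → ℝ) :
    wformN m n v (w₁ - w₂) = wformN m n v w₁ - wformN m n v w₂ := by
  simp only [wformN, Pi.sub_apply, mul_sub, Finset.sum_sub_distrib]
  ring

lemma wformN_abN {p q : ℕ} (n : ℕ) (v : (ℕ ⊕ ℕ) → ℝ) {i : ℕ} (hi : i < q) :
    wformN (p + q) n v (abN p i) = 2⁻¹ * (v (.inl (p + i)) - v (.inl i)) := by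
  have hpi : p + i ∈ Finset.range (p + q) := Finset.mem_range.2 (by omega)
  have hi' : i ∈ Finset.range (p + q) := Finset.mem_range.2 (by omega)
  simp [wformN, abN, wtN, Pi.single_apply, mul_sub, Finset.sum_sub_distrib, hpi, hi']
  ring

lemma wformN_afN {r s : ℕ} (m : ℕ) (v : (ℕ ⊕ ℕ) → ℝ) {j : ℕ} (hj : j < s) :
    wformN m (r + s) v (afN r j) = 2⁻¹ * (v (.inr j) - v (.inr (r + j))) := by
  have hrj : r + j ∈ Finset.range (r + s) := Finset.mem_range.2 (by omega)
  have hj' : j ∈ Finset.range (r + s) := Finset.mem_range.2 (by omega)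
  simp [wformN, afN, wtN, Pi.single_apply, mul_sub, Finset.sum_sub_distrib, hrj, hj']
  ring

section lamVecN

variable {p q r s : ℕ} (ld le : ℕ → ℝ)

lemma lamVecN_inl (hqp : q ≤ p) {t : ℕ} (ht : t < q) :
    lamVecN p q r s ld le (.inl t) = ld t := by
  simp only [lamVecN, wtN, Pi.add_apply, Finset.sum_apply, Pi.smul_apply, Pi.sub_apply,
    Pi.single_apply, Sum.inl.injEq, reduceCtorEq, if_false, smul_eq_mul]
  rw [Finset.sum_eq_single_of_mem t (Finset.mem_range.2 ht)]
  · simp [show p ≠ 0 by omega]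
  · intro i hi hit
    simp [Ne.symm hit, show t ≠ p + i by omega]

lemma lamVecN_inl_add (hqp : q ≤ p) {t : ℕ} (ht : t < q) :
    lamVecN p q r s ld le (.inl (p + t)) = -ld t := by
  simp only [lamVecN, wtN, Pi.add_apply, Finset.sum_apply, Pi.smul_apply, Pi.sub_apply,
    Pi.single_apply, Sum.inl.injEq, reduceCtorEq, if_false, smul_eq_mul]
  rw [Finset.sum_eq_single_of_mem t (Finset.mem_range.2 ht)]
  · simp [show p ≠ 0 by omega]
  · intro i hi hit
    simp only [Finset.mem_range] at hi
    simp [Ne.symm hit, show p + t ≠ i by omega]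

lemma lamVecN_inr (hsr : s ≤ r) {t : ℕ} (ht : t < s) :
    lamVecN p q r s ld le (.inr t) = le t := by
  simp only [lamVecN, wtN, Pi.add_apply, Finset.sum_apply, Pi.smul_apply, Pi.sub_apply,
    Pi.single_apply, Sum.inr.injEq, reduceCtorEq, if_false, smul_eq_mul]
  rw [Finset.sum_eq_single_of_mem t (Finset.mem_range.2 ht)]
  · simp [show r ≠ 0 by omega]
  · intro j hj hjt
    simp [Ne.symm hjt, show t ≠ r + j by omega]

lemma lamVecN_inr_add (hsr : s ≤ r) {t : ℕ} (ht : t < s) :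
    lamVecN p q r s ld le (.inr (r + t)) = -le t := by
  simp only [lamVecN, wtN, Pi.add_apply, Finset.sum_apply, Pi.smul_apply, Pi.sub_apply,
    Pi.single_apply, Sum.inr.injEq, reduceCtorEq, if_false, smul_eq_mul]
  rw [Finset.sum_eq_single_of_mem t (Finset.mem_range.2 ht)]
  · simp [show r ≠ 0 by omega]
  · intro j hj hjt
    simp only [Finset.mem_range] at hj
    simp [Ne.symm hjt, show r + t ≠ j by omega]

lemma wformN_lamVecN_abN (hqp : q ≤ p) {i : ℕ} (hi : i < q) :
    wformN (p + q) (r + s) (lamVecN p q r s ld le) (abN p i) = -ld i := by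
  rw [wformN_abN _ _ hi, lamVecN_inl_add ld le hqp hi, lamVecN_inl ld le hqp hi]
  ring

lemma wformN_lamVecN_afN (hsr : s ≤ r) {j : ℕ} (hj : j < s) :
    wformN (p + q) (r + s) (lamVecN p q r s ld le) (afN r j) = le j := by
  rw [wformN_afN _ _ hj, lamVecN_inr_add ld le hsr hj, lamVecN_inr ld le hsr hj]
  ring

end lamVecN

section sigmaPlusN

variable {p q r s : ℕ}

lemma abN_mem_sigmaPlusN {i : ℕ} (hi : i < q) : abN p i ∈ sigmaPlusN p q r s := by
  simp only [sigmaPlusN, Set.mem_union]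
  exact .inl <| .inl <| .inl <| .inl <| .inl <| .inl <| .inl ⟨i, hi, rfl⟩

lemma afN_mem_sigmaPlusN {j : ℕ} (hj : j < s) : afN r j ∈ sigmaPlusN p q r s := by
  simp only [sigmaPlusN, Set.mem_union]
  exact .inl <| .inl <| .inl <| .inl <| .inl <| .inr ⟨j, hj, rfl⟩

lemma abN_sub_afN_mem_sigmaPlusN {i j : ℕ} (hi : i < q) (hj : j < s) :
    abN p i - afN r j ∈ sigmaPlusN p q r s := by
  simp only [sigmaPlusN, Set.mem_union]
  exact .inl <| .inl <| .inl <| .inr ⟨i, hi, j, hj, rfl⟩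

lemma abN_sub_abN_mem_sigmaPlusN {i j : ℕ} (hij : i < j) (hj : j < q) :
    abN p i - abN p j ∈ sigmaPlusN p q r s := by
  simp only [sigmaPlusN, Set.mem_union]
  exact .inl <| .inr ⟨i, j, hij, hj, rfl⟩

lemma afN_sub_afN_mem_sigmaPlusN {i j : ℕ} (hij : i < j) (hj : j < s) :
    afN r i - afN r j ∈ sigmaPlusN p q r s := by
  simp only [sigmaPlusN, Set.mem_union]
  exact .inr ⟨i, j, hij, hj, rfl⟩

end sigmaPlusN

/-- if `⟨λ,α⟩ ∈ 2ℕ` for all positive restricted roots `α ∈ Σ⁺`, then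
`−λ_1^δ ≥ ⋯ ≥ −λ_q^δ ≥ λ_1^ε ≥ ⋯ ≥ λ_s^ε ≥ 0` and all coefficients are even integers. -/
theorem stmt11 (p q r s : ℕ) (hpq : q ≤ p) (hrs : s ≤ r) (ld le : ℕ → ℝ)
    (hpair : ∀ α ∈ sigmaPlusN p q r s,
        ∃ N : ℕ, wformN (p + q) (r + s) (lamVecN p q r s ld le) α = 2 * N) :
    (∀ i j, i ≤ j → j < q → -ld j ≤ -ld i) ∧
    (∀ i < q, ∀ j < s, le j ≤ -ld i) ∧
    (∀ i j, i ≤ j → j < s → le j ≤ le i) ∧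
    (∀ j < s, 0 ≤ le j) ∧
    (∀ i < q, 0 ≤ -ld i) ∧
    (∀ i < q, ∃ z : ℤ, ld i = 2 * z) ∧
    (∀ j < s, ∃ z : ℤ, le j = 2 * z) := by
  set B := wformN (p + q) (r + s) (lamVecN p q r s ld le)
  have hB_nonneg {α} (hα : α ∈ sigmaPlusN p q r s) : 0 ≤ B α := by
    obtain ⟨N, hN⟩ := hpair α hα
    rw [hN]
    positivity
  have hB_even {α} (hα : α ∈ sigmaPlusN p q r s) : ∃ z : ℤ, B α = 2 * z := by
    obtain ⟨N, hN⟩ := hpair α hα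
    exact ⟨N, by exact_mod_cast hN⟩
  have hB_sub (α β) : B (α - β) = B α - B β := wformN_sub_right _ _ _ α β
  have hBab {i} (hi : i < q) : B (abN p i) = -ld i := wformN_lamVecN_abN ld le hpq hi
  have hBaf {j} (hj : j < s) : B (afN r j) = le j := wformN_lamVecN_afN ld le hrs hj
  refine ⟨fun i j hij hj => ?_, fun i hi j hj => ?_, fun i j hij hj => ?_,
    fun j hj => hBaf hj ▸ hB_nonneg (afN_mem_sigmaPlusN hj),
    fun i hi => hBab hi ▸ hB_nonneg (abN_mem_sigmaPlusN hi), fun i hi => ?_, fun j hj => ?_⟩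
  · rcases hij.eq_or_lt with rfl | hij
    · rfl
    have h := hB_nonneg (abN_sub_abN_mem_sigmaPlusN hij hj)
    rw [hB_sub, hBab (hij.trans hj), hBab hj] at h
    linarith
  · have h := hB_nonneg (abN_sub_afN_mem_sigmaPlusN hi hj)
    rw [hB_sub, hBab hi, hBaf hj] at h
    linarith
  · rcases hij.eq_or_lt with rfl | hij
    · rfl
    have h := hB_nonneg (afN_sub_afN_mem_sigmaPlusN hij hj)
    rw [hB_sub, hBaf (hij.trans hj), hBaf hj] at h
    linarith
  · obtain ⟨z, hz⟩ := hB_even (abN_mem_sigmaPlusN hi)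
    exact ⟨-z, by push_cast; linarith [hBab hi]⟩
  · obtain ⟨z, hz⟩ := hB_even (afN_mem_sigmaPlusN hj)
    exact ⟨z, by linarith [hBaf hj]⟩
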